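/- The Koranyi norm satisfies the triangle inequality with respect to the Heisenberg group law: ρ(z·w) ≤ ρ(z) + ρ(w) for all z, w ∈ ℍⁿ. -/

import Mathlib

open MeasureTheory ENNReal Filter

noncomputable section

/-- The Heisenberg group `ℍⁿ` as a set: `ℝ^{2n} × ℝ`, where `ℝ^{2n}` is indexed by
`Fin n ⊕ Fin n` (first block `x₁,…,xₙ`, second block `x_{n+1},…,x_{2n}`). -/
abbrev Hn (n : ℕ) : Type := EuclideanSpace ℝ (Fin n ⊕ Fin n) × ℝ

namespace Hn

/-- The symplectic form `xᵗ J y` with `J = 2[[0,-Iₙ],[Iₙ,0]]`. -/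
def symp (n : ℕ) (x y : EuclideanSpace ℝ (Fin n ⊕ Fin n)) : ℝ :=
  2 * ∑ i : Fin n, (x (Sum.inr i) * y (Sum.inl i) - x (Sum.inl i) * y (Sum.inr i))

/-- Heisenberg group law `(x,t)·(y,s) = (x+y, t+s+xᵗJy)`. -/
def mul (n : ℕ) (z w : Hn n) : Hn n := (z.1 + w.1, z.2 + w.2 + symp n z.1 w.1)

/-- Group inverse `(x,t)⁻¹ = (-x,-t)`. -/
def inv (n : ℕ) (z : Hn n) : Hn n := (-z.1, -z.2)

/-- Neutral element. -/
def e (n : ℕ) : Hn n := (0, 0)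

/-- Koranyi norm `ρ(x,t) = (|x|⁴ + t²)^{1/4}`. -/
def rho (n : ℕ) (z : Hn n) : ℝ := (‖z.1‖ ^ 4 + z.2 ^ 2) ^ ((1 : ℝ)/4)

/-- Anisotropic dilation `r·(x,t) = (rx, r²t)`. -/
def dil (n : ℕ) (r : ℝ) (z : Hn n) : Hn n := (r • z.1, r ^ 2 * z.2)

/-- Koranyi ball `B(z₀,δ) = {w : ρ(z₀⁻¹·w) < δ}`. -/
def ball (n : ℕ) (z₀ : Hn n) (δ : ℝ) : Set (Hn n) := {w | rho n (mul n (inv n z₀) w) < δ}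

end Hn

namespace KoranyiAux

/-- Complexification map `ℝ^{2n} → ℂⁿ`. -/
def cvec (n : ℕ) (x : EuclideanSpace ℝ (Fin n ⊕ Fin n)) : EuclideanSpace ℂ (Fin n) :=
  WithLp.toLp 2 (fun i => (⟨x (Sum.inl i), x (Sum.inr i)⟩ : ℂ))

lemma norm_cvec (n : ℕ) (x : EuclideanSpace ℝ (Fin n ⊕ Fin n)) : ‖cvec n x‖ = ‖x‖ := by
  rw [EuclideanSpace.norm_eq, EuclideanSpace.norm_eq, Fintype.sum_sum_type,
    ← Finset.sum_add_distrib]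
  congr 1
  refine Finset.sum_congr rfl fun i _ => ?_
  rw [Complex.sq_norm]
  simp [cvec, Complex.normSq_mk, Real.norm_eq_abs, sq_abs, sq]

lemma inner_cvec_re (n : ℕ) (x y : EuclideanSpace ℝ (Fin n ⊕ Fin n)) :
    (inner ℂ (cvec n x) (cvec n y) : ℂ).re = inner ℝ x y := by
  rw [PiLp.inner_apply, PiLp.inner_apply, Complex.re_sum, Fintype.sum_sum_type,
    ← Finset.sum_add_distrib]
  refine Finset.sum_congr rfl fun i _ => ?_
  simp [cvec, Complex.mul_re, mul_comm]

lemma inner_cvec_im (n : ℕ) (x y : EuclideanSpace ℝ (Fin n ⊕ Fin n)) :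
    (inner ℂ (cvec n x) (cvec n y) : ℂ).im = - Hn.symp n x y / 2 := by
  rw [PiLp.inner_apply, Complex.im_sum, Hn.symp, neg_div,
    mul_div_cancel_left₀ _ (two_ne_zero), ← Finset.sum_neg_distrib]
  refine Finset.sum_congr rfl fun i _ => ?_
  simp [cvec, RCLike.inner_apply, Complex.mul_im]
  ring

end KoranyiAux

set_option maxHeartbeats 1000000 in
theorem koranyi_triangle (n : ℕ) (z w : Hn n) :
    Hn.rho n (Hn.mul n z w) ≤ Hn.rho n z + Hn.rho n w := by
  obtain ⟨x, t⟩ := z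
  obtain ⟨y, s⟩ := w
  set ω : ℝ := Hn.symp n x y with hω
  -- abbreviations
  set X : ℝ := ‖x‖ ^ 4 + t ^ 2 with hX
  set Y : ℝ := ‖y‖ ^ 4 + s ^ 2 with hY
  set Z : ℝ := ‖x + y‖ ^ 4 + (t + s + ω) ^ 2 with hZ
  have hX0 : (0:ℝ) ≤ X := by positivity
  have hY0 : (0:ℝ) ≤ Y := by positivity
  have hZ0 : (0:ℝ) ≤ Z := by positivity
  have hrz : Hn.rho n (x, t) = X ^ ((1:ℝ)/4) := rfl
  have hrw : Hn.rho n (y, s) = Y ^ ((1:ℝ)/4) := rfl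
  have hrm : Hn.rho n (Hn.mul n (x, t) (y, s)) = Z ^ ((1:ℝ)/4) := rfl
  rw [hrz, hrw, hrm]
  -- square of rho
  have hsq : ∀ A : ℝ, 0 ≤ A → (A ^ ((1:ℝ)/4)) ^ 2 = A ^ ((1:ℝ)/2) := by
    intro A hA
    rw [← Real.rpow_natCast (A ^ ((1:ℝ)/4)) 2, ← Real.rpow_mul hA]
    norm_num
  -- the complex numbers
  set P : ℂ := inner ℂ (KoranyiAux.cvec n x) (KoranyiAux.cvec n y) with hP
  have hCeq : (⟨‖x + y‖ ^ 2, -(t + s + ω)⟩ : ℂ)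
      = (⟨‖x‖ ^ 2, -t⟩ : ℂ) + (⟨‖y‖ ^ 2, -s⟩ : ℂ) + 2 * P := by
    apply Complex.ext
    · have := norm_add_sq_real x y
      simp only [Complex.add_re, Complex.mul_re, Complex.ofReal_re]
      rw [KoranyiAux.inner_cvec_re] at *
      simp [this]
      ring
    · simp only [Complex.add_im, Complex.mul_im]
      rw [KoranyiAux.inner_cvec_im]
      simp
      ring
  -- abs computations
  have habs : ∀ (a b : ℝ), 0 ≤ a → ‖(⟨a, b⟩ : ℂ)‖ = (a ^ 2 + b ^ 2) ^ ((1:ℝ)/2) := by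
    intro a b ha
    rw [Complex.norm_def, Complex.normSq_mk, Real.sqrt_eq_rpow]
    congr 1
    ring
  have hZabs : Z ^ ((1:ℝ)/2) = ‖(⟨‖x + y‖ ^ 2, -(t + s + ω)⟩ : ℂ)‖ := by
    rw [habs _ _ (by positivity)]
    congr 1
    rw [hZ]; ring
  have hP_le : ‖P‖ ≤ ‖x‖ * ‖y‖ := by
    have := norm_inner_le_norm (𝕜 := ℂ) (KoranyiAux.cvec n x) (KoranyiAux.cvec n y)
    rwa [KoranyiAux.norm_cvec, KoranyiAux.norm_cvec] at this
  -- main squared inequality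
  have key : Z ^ ((1:ℝ)/2) ≤ X ^ ((1:ℝ)/2) + Y ^ ((1:ℝ)/2) + 2 * (‖x‖ * ‖y‖) := by
    rw [hZabs, hCeq]
    calc ‖(⟨‖x‖ ^ 2, -t⟩ : ℂ) + (⟨‖y‖ ^ 2, -s⟩ : ℂ) + 2 * P‖
        ≤ ‖(⟨‖x‖ ^ 2, -t⟩ : ℂ)‖ + ‖(⟨‖y‖ ^ 2, -s⟩ : ℂ)‖
          + ‖2 * P‖ := by
          exact le_trans (norm_add_le _ _)
            (add_le_add_left (norm_add_le _ _) _)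
      _ ≤ X ^ ((1:ℝ)/2) + Y ^ ((1:ℝ)/2) + 2 * (‖x‖ * ‖y‖) := by
          rw [habs _ _ (by positivity), habs _ _ (by positivity)]
          have h2 : ‖2 * P‖ = 2 * ‖P‖ := by
            rw [norm_mul]; norm_num
          gcongr
          · apply le_of_eq; rw [hX]; ring
          · apply le_of_eq; rw [hY]; ring
          · rw [h2]; linarith
  -- ‖x‖ ≤ X^{1/4}
  have hx4 : ‖x‖ ≤ X ^ ((1:ℝ)/4) := by
    have h1 : (‖x‖ ^ 4 : ℝ) ^ ((1:ℝ)/4) ≤ X ^ ((1:ℝ)/4) := by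
      apply Real.rpow_le_rpow (by positivity) (by rw [hX]; nlinarith [sq_nonneg t]) (by norm_num)
    rwa [← Real.rpow_natCast ‖x‖ 4, ← Real.rpow_mul (norm_nonneg x), show ((4:ℕ):ℝ) * ((1:ℝ)/4) = 1 by norm_num, Real.rpow_one] at h1
  have hy4 : ‖y‖ ≤ Y ^ ((1:ℝ)/4) := by
    have h1 : (‖y‖ ^ 4 : ℝ) ^ ((1:ℝ)/4) ≤ Y ^ ((1:ℝ)/4) := by
      apply Real.rpow_le_rpow (by positivity) (by rw [hY]; nlinarith [sq_nonneg s]) (by norm_num)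
    rwa [← Real.rpow_natCast ‖y‖ 4, ← Real.rpow_mul (norm_nonneg y), show ((4:ℕ):ℝ) * ((1:ℝ)/4) = 1 by norm_num, Real.rpow_one] at h1
  -- conclude by comparing squares
  have hfin : (Z ^ ((1:ℝ)/4)) ^ 2 ≤ (X ^ ((1:ℝ)/4) + Y ^ ((1:ℝ)/4)) ^ 2 := by
    rw [hsq Z hZ0]
    have hexp : (X ^ ((1:ℝ)/4) + Y ^ ((1:ℝ)/4)) ^ 2
        = (X ^ ((1:ℝ)/4)) ^ 2 + (Y ^ ((1:ℝ)/4)) ^ 2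
          + 2 * (X ^ ((1:ℝ)/4) * Y ^ ((1:ℝ)/4)) := by ring
    rw [hexp, hsq X hX0, hsq Y hY0]
    have : ‖x‖ * ‖y‖ ≤ X ^ ((1:ℝ)/4) * Y ^ ((1:ℝ)/4) :=
      mul_le_mul hx4 hy4 (norm_nonneg y) (Real.rpow_nonneg hX0 _)
    linarith
  have h1 : (0:ℝ) ≤ Z ^ ((1:ℝ)/4) := Real.rpow_nonneg hZ0 _
  have h2 : (0:ℝ) ≤ X ^ ((1:ℝ)/4) + Y ^ ((1:ℝ)/4) :=
    add_nonneg (Real.rpow_nonneg hX0 _) (Real.rpow_nonneg hY0 _)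
  exact (pow_le_pow_iff_left₀ h1 h2 two_ne_zero).mp hfin
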